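/- The cop number of the n×n queen graph is at most 4 for all n ≥ 1. -/
import Mathlib


open SimpleGraph

/-- One step of movement: stay put or move along an edge. -/
def Step {V : Type*} (G : SimpleGraph V) (a b : V) : Prop := a = b ∨ G.Adj a b

/-- With the cops about to move, the cops can force a capture within `n` further rounds
from the position where the cops stand at `cs` and the robber at `r`. -/
inductive CopsWinIn {V : Type*} (G : SimpleGraph V) {k : ℕ} :
    ℕ → (Fin k → V) → V → Prop
  | catch {n : ℕ} {cs cs' : Fin k → V} {r : V}
      (h : ∀ i, Step G (cs i) (cs' i)) (hc : ∃ i, cs' i = r) :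
      CopsWinIn G n cs r
  | step {n : ℕ} {cs : Fin k → V} {r : V} (cs' : Fin k → V)
      (h : ∀ i, Step G (cs i) (cs' i))
      (hr : ∀ r', Step G r r' → CopsWinIn G n cs' r') :
      CopsWinIn G (n + 1) cs r

/-- `k` cops have a winning strategy on `G`: there are starting positions for the cops
such that wherever the robber starts, the cops can force a capture in finitely many moves. -/
def CopsWin {V : Type*} (G : SimpleGraph V) (k : ℕ) : Prop :=
  ∃ cs : Fin k → V, ∀ r : V, ∃ n, CopsWinIn G n cs r

/-- The cop number of `G`. -/
noncomputable def copNumber {V : Type*} (G : SimpleGraph V) : ℕ :=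
  sInf {k | CopsWin G k}

/-- The `n × n` knight graph. -/
def knightGraph (n : ℕ) : SimpleGraph (Fin n × Fin n) :=
  SimpleGraph.fromRel fun p q =>
    (|(p.1.1 : ℤ) - q.1.1| = 1 ∧ |(p.2.1 : ℤ) - q.2.1| = 2) ∨
    (|(p.1.1 : ℤ) - q.1.1| = 2 ∧ |(p.2.1 : ℤ) - q.2.1| = 1)

/-- The `n × n` rook graph. -/
def rookGraph (n : ℕ) : SimpleGraph (Fin n × Fin n) :=
  SimpleGraph.fromRel fun p q => p.1 = q.1 ∨ p.2 = q.2

/-- The `n × n` king graph. -/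
def kingGraph (n : ℕ) : SimpleGraph (Fin n × Fin n) :=
  SimpleGraph.fromRel fun p q =>
    max |(p.1.1 : ℤ) - q.1.1| |(p.2.1 : ℤ) - q.2.1| = 1

/-- The `n × n` queen graph. -/
def queenGraph (n : ℕ) : SimpleGraph (Fin n × Fin n) :=
  SimpleGraph.fromRel fun p q =>
    p.1 = q.1 ∨ p.2 = q.2 ∨
    (p.1.1 : ℤ) - q.1.1 = (p.2.1 : ℤ) - q.2.1 ∨
    (p.1.1 : ℤ) - q.1.1 = -((p.2.1 : ℤ) - q.2.1)

/-- `G` is dismantlable: its vertices can be enumerated `e 0, e 1, …` so that each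
vertex except the last is dominated (closed neighborhoods) by a later vertex in the
subgraph induced on the not-yet-removed vertices. -/
def Dismantlable {V : Type*} (G : SimpleGraph V) : Prop :=
  ∃ (n : ℕ) (e : Fin n ≃ V), 0 < n ∧
    ∀ i : Fin n, (i : ℕ) < n - 1 → ∃ j : Fin n, i < j ∧
      ∀ w : Fin n, i ≤ w → Step G (e i) (e w) → Step G (e j) (e w)


section QueenAux

lemma catch_now {V : Type*} {G : SimpleGraph V} {k m : ℕ} {cs : Fin k → V} {r : V}
    (i : Fin k) (h : Step G (cs i) r) : CopsWinIn G m cs r := by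
  refine CopsWinIn.catch (cs' := fun j => if j = i then r else cs j) (fun j => ?_) ⟨i, by simp⟩
  rcases eq_or_ne j i with rfl | hj
  · simpa using h
  · show Step G (cs j) (if j = i then r else cs j)
    rw [if_neg hj]
    exact Or.inl rfl

lemma queen_step {n : ℕ} {a b c d : Fin n}
    (h : a.1 = c.1 ∨ b.1 = d.1 ∨ (a.1 : ℤ) - c.1 = (b.1 : ℤ) - d.1 ∨
      (a.1 : ℤ) - c.1 = -((b.1 : ℤ) - d.1)) :
    Step (queenGraph n) (a, b) (c, d) := by
  rcases eq_or_ne ((a, b) : Fin n × Fin n) (c, d) with heq | hne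
  · exact Or.inl heq
  · refine Or.inr ?_
    simp only [queenGraph, fromRel_adj]
    refine ⟨hne, Or.inl ?_⟩
    rcases h with h | h | h | h
    · exact Or.inl (Fin.ext h)
    · exact Or.inr (Or.inl (Fin.ext h))
    · exact Or.inr (Or.inr (Or.inl h))
    · exact Or.inr (Or.inr (Or.inr h))

lemma queen_adj {n : ℕ} {a b c d : Fin n} (h : (queenGraph n).Adj (a, b) (c, d)) :
    a.1 = c.1 ∨ b.1 = d.1 ∨ (a.1 : ℤ) - c.1 = (b.1 : ℤ) - d.1 ∨
      (a.1 : ℤ) - c.1 = -((b.1 : ℤ) - d.1) := by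
  simp only [queenGraph, fromRel_adj] at h
  obtain ⟨-, h | h⟩ := h <;> rcases h with h | h | h | h
  · exact Or.inl (congrArg Fin.val h)
  · exact Or.inr (Or.inl (congrArg Fin.val h))
  · exact Or.inr (Or.inr (Or.inl h))
  · exact Or.inr (Or.inr (Or.inr h))
  · exact Or.inl (congrArg Fin.val h.symm)
  · exact Or.inr (Or.inl (congrArg Fin.val h.symm))
  · exact Or.inr (Or.inr (Or.inl (by omega)))
  · exact Or.inr (Or.inr (Or.inr (by omega)))

/-- Second phase: the four cops are aligned with the robber's row, column, and (up to the
frozen parity) anti-diagonal and diagonal: they move onto the robber's four queen-lines,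
after which every robber move is caught. -/
lemma queen_round2 {n : ℕ} (hn : 0 < n) (a b a1 b1 : Fin n)
    (hpar : (a.1 + b.1) % 2 = (a1.1 + b1.1) % 2) :
    CopsWinIn (queenGraph n) 1
      ![ (a, ⟨0, hn⟩), (⟨0, hn⟩, b),
         (⟨(a.1 + b.1) % 2, by have := a.2; have := b.2; omega⟩, ⟨0, hn⟩),
         (⟨0, hn⟩, ⟨n - 1 - (a.1 + n - 1 - b.1) % 2, by omega⟩) ]
      (a1, b1) := by
  have ha := a.2; have hb := b.2; have ha1 := a1.2; have hb1 := b1.2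
  refine CopsWinIn.step
    ![ (a1, ⟨0, hn⟩), (⟨0, hn⟩, b1),
       (⟨(a1.1 + b1.1 + 1) / 2, by omega⟩, ⟨(a1.1 + b1.1) / 2, by omega⟩),
       (⟨(a1.1 + n - 1 - b1.1) / 2, by omega⟩,
        ⟨n - 1 - (a1.1 + n - 1 - b1.1 + 1) / 2, by omega⟩) ]
    (fun i => ?_) (fun r2 hr2 => ?_)
  · fin_cases i
    · exact queen_step (Or.inr (Or.inl rfl))
    · exact queen_step (Or.inl rfl)
    · exact queen_step (Or.inr (Or.inr (Or.inl (by simp only [Fin.val_mk]; omega))))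
    · exact queen_step (Or.inr (Or.inr (Or.inr (by simp only [Fin.val_mk]; omega))))
  · obtain ⟨a2, b2⟩ := r2
    have ha2 := a2.2; have hb2 := b2.2
    rcases hr2 with heq | hadj
    · injection heq with h1 h2
      exact catch_now 0 (queen_step (Or.inl (congrArg Fin.val h1)))
    · rcases queen_adj hadj with h | h | h | h
      · exact catch_now 0 (queen_step (Or.inl h))
      · exact catch_now 1 (queen_step (Or.inr (Or.inl h)))
      · exact catch_now 3
          (queen_step (Or.inr (Or.inr (Or.inl (by simp only [Fin.val_mk]; omega)))))
      · exact catch_now 2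
          (queen_step (Or.inr (Or.inr (Or.inr (by simp only [Fin.val_mk]; omega)))))

end QueenAux

/-- the cop number of the `n × n` queen graph is at most 4 for `n ≥ 1`. -/
theorem copNumber_queen_le_four (n : ℕ) (hn : 1 ≤ n) :
    copNumber (queenGraph n) ≤ 4 := by
  apply Nat.sInf_le
  show CopsWin (queenGraph n) 4
  refine ⟨fun _ => (⟨0, hn⟩, ⟨0, hn⟩), fun r => ⟨2, ?_⟩⟩
  obtain ⟨a, b⟩ := r
  have ha := a.2; have hb := b.2
  refine CopsWinIn.step
    ![ (a, ⟨0, hn⟩), (⟨0, hn⟩, b),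
       (⟨(a.1 + b.1) % 2, by omega⟩, ⟨0, hn⟩),
       (⟨0, hn⟩, ⟨n - 1 - (a.1 + n - 1 - b.1) % 2, by omega⟩) ]
    (fun i => ?_) (fun r1 hr1 => ?_)
  · fin_cases i
    · exact queen_step (Or.inr (Or.inl rfl))
    · exact queen_step (Or.inl rfl)
    · exact queen_step (Or.inr (Or.inl rfl))
    · exact queen_step (Or.inl rfl)
  · obtain ⟨a1, b1⟩ := r1
    have ha1 := a1.2; have hb1 := b1.2
    rcases hr1 with heq | hadj
    · injection heq with h1 h2
      exact catch_now 0 (queen_step (Or.inl (congrArg Fin.val h1)))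
    · rcases queen_adj hadj with h | h | h | h
      · exact catch_now 0 (queen_step (Or.inl h))
      · exact catch_now 1 (queen_step (Or.inr (Or.inl h)))
      · exact queen_round2 hn a b a1 b1 (by omega)
      · exact queen_round2 hn a b a1 b1 (by omega)
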